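/- arXiv:2006.05157 — 2 statements merged into one kernel-verified Lean document; each statement's English description precedes it below -/
import Mathlib

section
/- Let n, m ≥ 2 and let f : E(n) → E(m) be an injective function preserving ∔, − and 0 and satisfying f(a_{11}) = b_{11}, f(a_{12}) = b_{12}, f(a_{21}) = b_{21}, f(a_{22}) = b_{22}, f(a_{n−1,n−1}) = b_{m−1,m−1}, f(a_{n−1,n}) = b_{m−1,m}, f(a_{n,n−1}) = b_{m,m−1}, and f(a_{nn}) = b_{mm}, where a_{ik} := some (true, (i,k)) in E(n) and b_{ik} := some (true, (i,k)) in E(m). Then n = m and f is the identity morphism: f(none) = none and f(some (ε, (i,k))) = some (ε, (i,k)) for every ε ∈ Bool and every (i,k) ∈ S(n). -/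
open scoped Classical

def Sset (n : ℕ) : Set (ℕ × ℕ) :=
  {p | 1 ≤ p.1 ∧ p.1 ≤ n ∧ 1 ≤ p.2 ∧ p.2 ≤ n ∧ p.1 ≤ p.2 + 1 ∧ p.2 ≤ p.1 + 2}

/-- `S(n)` as a sublattice of `ℕ × ℕ` (componentwise max and min). -/
def SL (n : ℕ) : Sublattice (ℕ × ℕ) where
  carrier := Sset n
  supClosed' := by
    rintro ⟨i, k⟩ h1 ⟨l, m⟩ h2
    simp only [Sset, Set.mem_setOf_eq, Prod.sup_def] at h1 h2 ⊢
    omega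
  infClosed' := by
    rintro ⟨i, k⟩ h1 ⟨l, m⟩ h2
    simp only [Sset, Set.mem_setOf_eq, Prod.inf_def] at h1 h2 ⊢
    omega

/-- `D(n) = WithBot S(n)`: `S(n)` with a bottom element `O` adjoined. -/
abbrev Dn (n : ℕ) : Type := WithBot ↥(SL n)

/-- The element `a_{ik}` of `D(n)` (junk value `⊥` if `(i,k) ∉ S(n)`). -/
noncomputable def aElt (n i k : ℕ) : Dn n :=
  if h : (i, k) ∈ SL n then (↑(⟨(i, k), h⟩ : ↥(SL n)) : Dn n) else ⊥

/-- F∞-module structure on `Option (Bool × α)` for a meet-semilattice `α`. -/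
abbrev Emod (α : Type) : Type := Option (Bool × α)

/-- Negation: `−none = none`, `−some (ε, p) = some (¬ε, p)`. -/
def Emod.neg {α : Type} : Emod α → Emod α :=
  Option.map (fun p => (!p.1, p.2))

/-- Addition: `x ∔ none = none ∔ x = none`, and
`some (ε, p) ∔ some (ε', q) = some (ε, p ⊓ q)` if `ε = ε'`, `none` otherwise. -/
noncomputable def Emod.add {α : Type} [SemilatticeInf α] : Emod α → Emod α → Emod α
  | some (ε, p), some (ε', q) => if ε = ε' then some (ε, p ⊓ q) else none
  | _, _ => none

/-- Nonzero vectors of the free F∞-module of rank `m`. -/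
abbrev FVec (m : ℕ) : Type := {σ : Fin m → Option Bool // σ ≠ fun _ => none}

/-- The free F∞-module of rank `m`, with zero `none`. -/
abbrev Fm (m : ℕ) : Type := Option (FVec m)

/-- Negation on the free F∞-module: Boolean negation on each defined value. -/
def Fm.neg {m : ℕ} : Fm m → Fm m :=
  Option.map (fun σ => ⟨fun i => (σ.val i).map (fun b => !b), by
    intro hcontra
    apply σ.prop
    funext i
    have h := congrFun hcontra i
    simpa using h⟩)

/-- Addition on the free F∞-module: `none` absorbs; two nonzero vectors add to `none`
if they clash in some coordinate, and otherwise to their pointwise merge. -/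
noncomputable def Fm.add {m : ℕ} : Fm m → Fm m → Fm m
  | some σ, some τ =>
      if ∃ (i : Fin m) (b : Bool), σ.val i = some b ∧ τ.val i = some (!b) then none
      else some ⟨fun i => (σ.val i).or (τ.val i), by
        intro hcontra
        apply σ.prop
        funext i
        have h := congrFun hcontra i
        cases hv : σ.val i with
        | none => rfl
        | some b => rw [hv] at h; simp [Option.or] at h⟩
  | _, _ => none

/-- A type with F∞-module operations `0`, `∔`, `−`. -/
class FStr (α : Type) where
  z : α
  add : α → α → α
  neg : α → α

noncomputable instance {α : Type} [SemilatticeInf α] : FStr (Emod α) :=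
  ⟨none, Emod.add, Emod.neg⟩

noncomputable instance {m : ℕ} : FStr (Fm m) :=
  ⟨none, Fm.add, Fm.neg⟩

/-- A map preserving `0`, `∔` and `−`. -/
def IsFHom {α β : Type} [FStr α] [FStr β] (f : α → β) : Prop :=
  f FStr.z = FStr.z ∧ (∀ x y, f (FStr.add x y) = FStr.add (f x) (f y)) ∧
    ∀ x, f (FStr.neg x) = FStr.neg (f x)

/-- The F∞-module `E(n) = Option (Bool × S(n))`. -/
abbrev En (n : ℕ) : Type := Emod ↥(SL n)

/-- The element `some (ε, (i,k))` of `E(n)` (junk value `none` if `(i,k) ∉ S(n)`). -/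
noncomputable def eElt (n : ℕ) (ε : Bool) (i k : ℕ) : En n :=
  if h : (i, k) ∈ SL n then some (ε, ⟨(i, k), h⟩) else none

/-!
For positive `x`, injectivity gives `f x ∔ f a₁₁ = f (x ∔ a₁₁) ≠ 0`, so `f x` is positive and
`f` is induced by an injective meet-homomorphism `ψ : S(n) → S(m)`, which is then strictly
monotone. Inside the band `S(n)`, the meets `(i, i) = (i, i+1) ⊓ (i+1, i)` and
`(i, i+1) = (i+1, i+1) ⊓ (i, i+2)`, strict monotonicity and the width of the band `S(m)`
propagate `ψ = id` from `(1, 1)` and `(2, 1)` along the diagonal and the subdiagonal.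
At `(n, n-1)` this gives `n = m`.
-/

namespace Emod

variable {α β : Type} [SemilatticeInf α] [SemilatticeInf β]

lemma add_some_some (ε : Bool) (p q : α) :
    Emod.add (some (ε, p)) (some (ε, q)) = some (ε, p ⊓ q) := by
  simp [Emod.add]

theorem exists_injective_infHom_of_isFHom {f : Emod α → Emod β} (hf : IsFHom f)
    (hinj : Function.Injective f) {a : α} {b : β} (hab : f (some (true, a)) = some (true, b)) :
    ∃ ψ : InfHom α β, Function.Injective ψ ∧ ∀ ε p, f (some (ε, p)) = some (ε, ψ p) := by
  obtain ⟨hzero, hadd, hneg⟩ := hf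
  replace hadd : ∀ x y, f (Emod.add x y) = Emod.add (f x) (f y) := hadd
  replace hneg : ∀ x, f (Emod.neg x) = Emod.neg (f x) := hneg
  have hpos : ∀ p, ∃ q, f (some (true, p)) = some (true, q) := by
    intro p
    have hne : f (some (true, p ⊓ a)) ≠ none := fun h =>
      Option.some_ne_none _ (hinj (h.trans hzero.symm))
    rw [← add_some_some, hadd, hab] at hne
    rcases hfp : f (some (true, p)) with _ | ⟨_ | _, q⟩
    all_goals simp_all [Emod.add]
  choose ψ hψ using hpos
  have hsome : ∀ ε p, f (some (ε, p)) = some (ε, ψ p) := by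
    rintro (_ | _) p
    · rw [show some (false, p) = Emod.neg (some (true, p)) from rfl, hneg, hψ]
      rfl
    · exact hψ p
  refine ⟨⟨ψ, fun p q => ?_⟩, fun p q hpq => ?_, hsome⟩
  · have h := hadd (some (true, p)) (some (true, q))
    rw [add_some_some, hψ, hψ, hψ, add_some_some] at h
    simpa using h
  · have h : f (some (true, p)) = f (some (true, q)) := by
      rw [hsome, hsome]
      exact congrArg (fun r => some (true, r)) hpq
    simpa using hinj h

end Emod

structure IsInfEmbeddingOn {α β : Type*} [SemilatticeInf α] [SemilatticeInf β] (ψ : α → β)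
    (s : Set α) (t : Set β) : Prop where
  mapsTo : Set.MapsTo ψ s t
  map_inf : ∀ p ∈ s, ∀ q ∈ s, ψ (p ⊓ q) = ψ p ⊓ ψ q
  strictMonoOn : StrictMonoOn ψ s

lemma IsInfEmbeddingOn.map_inf_of_eq {α β : Type*} [SemilatticeInf α] [SemilatticeInf β]
    {ψ : α → β} {s : Set α} {t : Set β} (h : IsInfEmbeddingOn ψ s t) {p q r : α} (hp : p ∈ s)
    (hq : q ∈ s) (hr : p ⊓ q = r) : ψ r = ψ p ⊓ ψ q :=
  hr ▸ h.map_inf p hp q hq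

section valExtend

variable {α : Type*} [Lattice α] {s t : Sublattice α}

/-- The value at `p ∉ s` is junk (`p` itself). -/
noncomputable def valExtend (ψ : s → t) : α → α :=
  Function.extend Subtype.val (fun p => (ψ p : α)) id

lemma valExtend_coe (ψ : s → t) (p : s) : valExtend ψ p = ψ p :=
  Subtype.val_injective.extend_apply _ _ p

lemma isInfEmbeddingOn_valExtend (ψ : InfHom s t) (hψ : Function.Injective ψ) :
    IsInfEmbeddingOn (valExtend ψ) s t where
  mapsTo p hp := by
    rw [← Subtype.coe_mk p hp, valExtend_coe]
    exact (ψ _).2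
  map_inf p hp q hq := by
    rw [← Subtype.coe_mk p hp, ← Subtype.coe_mk q hq, ← Sublattice.coe_inf, valExtend_coe,
      valExtend_coe, valExtend_coe, map_inf, Sublattice.coe_inf]
  strictMonoOn p hp q hq hpq := by
    rw [← Subtype.coe_mk p hp, ← Subtype.coe_mk q hq, valExtend_coe, valExtend_coe]
    exact ((OrderHomClass.mono ψ).strictMono_of_injective hψ) hpq

end valExtend

lemma mem_Sset_iff {n i k : ℕ} :
    (i, k) ∈ Sset n ↔ 1 ≤ i ∧ i ≤ n ∧ 1 ≤ k ∧ k ≤ n ∧ i ≤ k + 1 ∧ k ≤ i + 2 :=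
  Iff.rfl

namespace IsInfEmbeddingOn

variable {n m : ℕ} {ψ : ℕ × ℕ → ℕ × ℕ}

/-- `(i, i) = (i, i+1) ⊓ (i+1, i) = (i, i+2) ⊓ (i+1, i)` pins the first coordinates of the
images of `(i, i+1) < (i, i+2)` to `i`, and `k ≤ i + 2` in `S(m)` caps the second ones. -/
lemma map_superdiagonal (h : IsInfEmbeddingOn ψ (Sset n) (Sset m)) {i : ℕ} (hi : 1 ≤ i)
    (hin : i + 2 ≤ n) (hd : ψ (i, i) = (i, i)) (hs : ψ (i + 1, i) = (i + 1, i)) :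
    ψ (i, i + 1) = (i, i + 1) ∧ ψ (i, i + 2) = (i, i + 2) := by
  have m0 : (i, i) ∈ Sset n := mem_Sset_iff.2 (by omega)
  have m1 : (i, i + 1) ∈ Sset n := mem_Sset_iff.2 (by omega)
  have m2 : (i, i + 2) ∈ Sset n := mem_Sset_iff.2 (by omega)
  have ms : (i + 1, i) ∈ Sset n := mem_Sset_iff.2 (by omega)
  have h1 := h.map_inf_of_eq (r := (i, i)) m1 ms (by ext <;> simp)
  have h2 := h.map_inf_of_eq (r := (i, i)) m2 ms (by ext <;> simp)
  have lt1 := h.strictMonoOn m0 m1 (by simp [Prod.lt_iff])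
  have lt2 := h.strictMonoOn m1 m2 (by simp [Prod.lt_iff])
  obtain ⟨-, -, -, -, -, band⟩ := h.mapsTo m2
  rw [hd, hs] at h1 h2
  rw [hd] at lt1
  simp only [Prod.ext_iff, Prod.fst_inf, Prod.snd_inf, Prod.lt_iff] at h1 h2 lt1 lt2 ⊢
  omega

/-- `(i, i+1) = (i+1, i+1) ⊓ (i, i+2) = (i+2, i+1) ⊓ (i, i+2)` pins the second coordinates
of the images of `(i+1, i+1) < (i+2, i+1)` to `i + 1`, and `i ≤ k + 1` in `S(m)` caps the
first ones. -/
lemma map_diagonal_succ (h : IsInfEmbeddingOn ψ (Sset n) (Sset m)) {i : ℕ} (hi : 1 ≤ i)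
    (hin : i + 2 ≤ n) (hs : ψ (i + 1, i) = (i + 1, i)) (hu : ψ (i, i + 1) = (i, i + 1))
    (hu₂ : ψ (i, i + 2) = (i, i + 2)) :
    ψ (i + 1, i + 1) = (i + 1, i + 1) ∧ ψ (i + 2, i + 1) = (i + 2, i + 1) := by
  have ms : (i + 1, i) ∈ Sset n := mem_Sset_iff.2 (by omega)
  have m1 : (i + 1, i + 1) ∈ Sset n := mem_Sset_iff.2 (by omega)
  have m2 : (i + 2, i + 1) ∈ Sset n := mem_Sset_iff.2 (by omega)
  have mu : (i, i + 2) ∈ Sset n := mem_Sset_iff.2 (by omega)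
  have h1 := h.map_inf_of_eq (r := (i, i + 1)) m1 mu (by ext <;> simp)
  have h2 := h.map_inf_of_eq (r := (i, i + 1)) m2 mu (by ext <;> simp)
  have lt1 := h.strictMonoOn ms m1 (by simp [Prod.lt_iff])
  have lt2 := h.strictMonoOn m1 m2 (by simp [Prod.lt_iff])
  obtain ⟨-, -, -, -, band, -⟩ := h.mapsTo m2
  rw [hu, hu₂] at h1 h2
  rw [hs] at lt1
  simp only [Prod.ext_iff, Prod.fst_inf, Prod.snd_inf, Prod.lt_iff] at h1 h2 lt1 lt2 ⊢
  omega

lemma map_diagonal_and_subdiagonal (h : IsInfEmbeddingOn ψ (Sset n) (Sset m))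
    (h11 : ψ (1, 1) = (1, 1)) (h21 : ψ (2, 1) = (2, 1)) {i : ℕ} (hi : 1 ≤ i) :
    i + 1 ≤ n → ψ (i, i) = (i, i) ∧ ψ (i + 1, i) = (i + 1, i) := by
  induction i, hi using Nat.le_induction with
  | base => exact fun _ => ⟨h11, h21⟩
  | succ i hi ih =>
    intro hin
    obtain ⟨hd, hs⟩ := ih (by omega)
    obtain ⟨hu, hu₂⟩ := h.map_superdiagonal hi (by omega) hd hs
    exact h.map_diagonal_succ hi (by omega) hs hu hu₂

theorem eq_and_eqOn_id_of_corners (h : IsInfEmbeddingOn ψ (Sset n) (Sset m)) (hn : 2 ≤ n)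
    (h11 : ψ (1, 1) = (1, 1)) (h21 : ψ (2, 1) = (2, 1)) (t12 : ψ (n - 1, n) = (m - 1, m))
    (t21 : ψ (n, n - 1) = (m, m - 1)) (t22 : ψ (n, n) = (m, m)) :
    n = m ∧ Set.EqOn ψ id (Sset n) := by
  have hdiag {i : ℕ} (hi : 1 ≤ i) := h.map_diagonal_and_subdiagonal h11 h21 hi
  obtain rfl : n = m := by
    have hlast := (hdiag (i := n - 1) (by omega) (by omega)).2
    rw [Nat.sub_add_cancel (by omega), t21] at hlast
    exact (congrArg Prod.fst hlast).symm
  refine ⟨rfl, ?_⟩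
  rintro ⟨i, k⟩ hik
  obtain ⟨hi, hin, hk, hkn, hki, hik₂⟩ := mem_Sset_iff.1 hik
  have hsuper (hi₂ : i + 2 ≤ n) := h.map_superdiagonal hi hi₂ (hdiag hi (by omega)).1
    (hdiag hi (by omega)).2
  obtain ⟨rfl, hlt⟩ | ⟨rfl, rfl⟩ | rfl | ⟨rfl, hlt⟩ | ⟨rfl, rfl⟩ | rfl :
      k = i ∧ i < n ∨ k = i ∧ i = n ∨ i = k + 1 ∨ k = i + 1 ∧ i + 2 ≤ n ∨
        k = i + 1 ∧ i + 1 = n ∨ k = i + 2 := by omega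
  · exact (hdiag hi (by omega)).1
  · exact t22
  · exact (hdiag hk (by omega)).2
  · exact (hsuper (by omega)).1
  · simpa using t12
  · exact (hsuper (by omega)).2

end IsInfEmbeddingOn

lemma eElt_of_mem {n i k : ℕ} (ε : Bool) (h : (i, k) ∈ Sset n) :
    eElt n ε i k = some (ε, ⟨(i, k), h⟩) :=
  dif_pos h

lemma eElt_inj {n : ℕ} {ε : Bool} {p q : ℕ × ℕ} (hp : p ∈ Sset n) (hq : q ∈ Sset n) :
    eElt n ε p.1 p.2 = eElt n ε q.1 q.2 ↔ p = q := by
  rw [eElt_of_mem ε hp, eElt_of_mem ε hq]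
  simp

theorem stmt6_general (n m : ℕ) (hn : 2 ≤ n) (hm : 2 ≤ m)
    (f : En n → En m) (hhom : IsFHom f) (hinj : Function.Injective f)
    (h11 : f (eElt n true 1 1) = eElt m true 1 1)
    (h21 : f (eElt n true 2 1) = eElt m true 2 1)
    (t12 : f (eElt n true (n - 1) n) = eElt m true (m - 1) m)
    (t21 : f (eElt n true n (n - 1)) = eElt m true m (m - 1))
    (t22 : f (eElt n true n n) = eElt m true m m) :
    n = m ∧ f none = none ∧
      ∀ (ε : Bool) (i k : ℕ), (i, k) ∈ Sset n → f (eElt n ε i k) = eElt m ε i k := by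
  have m11n : ((1, 1) : ℕ × ℕ) ∈ Sset n := mem_Sset_iff.2 (by omega)
  have m11m : ((1, 1) : ℕ × ℕ) ∈ Sset m := mem_Sset_iff.2 (by omega)
  obtain ⟨ψ, hψ, hfψ⟩ := Emod.exists_injective_infHom_of_isFHom hhom hinj
    (a := ⟨(1, 1), m11n⟩) (b := ⟨(1, 1), m11m⟩) (by rwa [← eElt_of_mem, ← eElt_of_mem])
  set φ := valExtend ψ
  have hφ : IsInfEmbeddingOn φ (Sset n) (Sset m) := isInfEmbeddingOn_valExtend ψ hψ
  have hfφ (ε : Bool) {p : ℕ × ℕ} (hp : p ∈ Sset n) :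
      f (eElt n ε p.1 p.2) = eElt m ε (φ p).1 (φ p).2 := by
    rw [eElt_of_mem ε hp, hfψ, show φ p = ψ ⟨p, hp⟩ from valExtend_coe ψ ⟨p, hp⟩,
      eElt_of_mem ε (ψ ⟨p, hp⟩).2]
  have hφ_eq {p q : ℕ × ℕ} (hp : p ∈ Sset n) (hq : q ∈ Sset m)
      (hfpq : f (eElt n true p.1 p.2) = eElt m true q.1 q.2) : φ p = q :=
    (eElt_inj (hφ.mapsTo hp) hq).1 ((hfφ true hp).symm.trans hfpq)
  obtain ⟨rfl, hid⟩ := hφ.eq_and_eqOn_id_of_corners hn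
    (hφ_eq (mem_Sset_iff.2 (by omega)) (mem_Sset_iff.2 (by omega)) h11)
    (hφ_eq (mem_Sset_iff.2 (by omega)) (mem_Sset_iff.2 (by omega)) h21)
    (hφ_eq (mem_Sset_iff.2 (by omega)) (mem_Sset_iff.2 (by omega)) t12)
    (hφ_eq (mem_Sset_iff.2 (by omega)) (mem_Sset_iff.2 (by omega)) t21)
    (hφ_eq (mem_Sset_iff.2 (by omega)) (mem_Sset_iff.2 (by omega)) t22)
  exact ⟨rfl, hhom.1, fun ε i k hik => by rw [hfφ ε hik, hid hik]; rfl⟩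

/-- Any injective map `f : E(n) → E(m)` (`n, m ≥ 2`) preserving `∔`, `−` and `0` and
matching the four bottom corner elements `a_{11}, a_{12}, a_{21}, a_{22}` and the four
top corner elements is the identity morphism (and in particular `n = m`). -/
theorem stmt6 (n m : ℕ) (hn : 2 ≤ n) (hm : 2 ≤ m)
    (f : En n → En m) (hhom : IsFHom f) (hinj : Function.Injective f)
    (h11 : f (eElt n true 1 1) = eElt m true 1 1)
    (h12 : f (eElt n true 1 2) = eElt m true 1 2)
    (h21 : f (eElt n true 2 1) = eElt m true 2 1)
    (h22 : f (eElt n true 2 2) = eElt m true 2 2)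
    (t11 : f (eElt n true (n - 1) (n - 1)) = eElt m true (m - 1) (m - 1))
    (t12 : f (eElt n true (n - 1) n) = eElt m true (m - 1) m)
    (t21 : f (eElt n true n (n - 1)) = eElt m true m (m - 1))
    (t22 : f (eElt n true n n) = eElt m true m m) :
    n = m ∧ f none = none ∧
      ∀ (ε : Bool) (i k : ℕ), (i, k) ∈ Sset n → f (eElt n ε i k) = eElt m ε i k :=
  stmt6_general n m hn hm f hhom hinj h11 h21 t12 t21 t22
end

section
/- Let n ≥ 4. The map κ : E_0 → E(n) defined by κ(none) = none and κ(some (ε, p)) = some (ε, φ(p)), where φ(1,1) = (1,1), φ(1,2) = (1,2), φ(2,1) = (2,1), φ(2,2) = (2,2), φ(3,3) = (n−1,n−1), φ(3,4) = (n−1,n), φ(4,3) = (n,n−1), φ(4,4) = (n,n), is injective and preserves ∔, − and 0, and it is a splittable injection: there exists a map λ : E(n) → E_0 preserving ∔, − and 0 with λ ∘ κ = id on E_0. -/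
open scoped Classical

/-- The 8-element sublattice of `ℕ × ℕ` underlying `D_0`. -/
def SL0 : Sublattice (ℕ × ℕ) where
  carrier := {(1,1),(1,2),(2,1),(2,2),(3,3),(3,4),(4,3),(4,4)}
  supClosed' := by
    intro a ha b hb
    simp only [Set.mem_insert_iff, Set.mem_singleton_iff] at *
    rcases ha with rfl|rfl|rfl|rfl|rfl|rfl|rfl|rfl <;>
      rcases hb with rfl|rfl|rfl|rfl|rfl|rfl|rfl|rfl <;> decide
  infClosed' := by
    intro a ha b hb
    simp only [Set.mem_insert_iff, Set.mem_singleton_iff] at *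
    rcases ha with rfl|rfl|rfl|rfl|rfl|rfl|rfl|rfl <;>
      rcases hb with rfl|rfl|rfl|rfl|rfl|rfl|rfl|rfl <;> decide

/-- The 9-element B-module `D_0` (with bottom element `O` adjoined). -/
abbrev D0 : Type := WithBot ↥SL0

/-- The element `A_{ik}` of `D_0` (junk value `⊥` if `(i,k)` is not in the lattice). -/
noncomputable def A0 (i k : ℕ) : D0 :=
  if h : (i, k) ∈ SL0 then (↑(⟨(i, k), h⟩ : ↥SL0) : D0) else ⊥

/-- The F∞-module `E_0 = Option (Bool × S_0)`. -/
abbrev E0 : Type := Emod ↥SL0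

/-- The element `some (ε, (i,k))` of `E_0` (junk value `none` if `(i,k) ∉ S_0`). -/
noncomputable def eElt0 (ε : Bool) (i k : ℕ) : E0 :=
  if h : (i, k) ∈ SL0 then some (ε, ⟨(i, k), h⟩) else none

/-!
An inf-homomorphism `f : α → β` of meet-semilattices induces the F∞-module map
`some (ε, p) ↦ some (ε, f p)` from `Option (Bool × α)` to `Option (Bool × β)`, and a left inverse
of `f` induces a left inverse of it. So `κ` comes from the meet-embedding `φ : S_0 → S(n)` which
fixes the block `{1,2}²` and moves `{3,4}²` to the corner `{n-1,n}²`, and `λ` from a meet-retraction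
of `φ`: shift the corner back to `{3,4}²` and send every other `p` to `p ⊓ (2,2)`.
-/

namespace Emod

def map {α β : Type} (f : α → β) : Emod α → Emod β := Option.map (Prod.map id f)

lemma isFHom_map {α β : Type} [SemilatticeInf α] [SemilatticeInf β] (f : InfHom α β) :
    IsFHom (map f) := by
  refine ⟨rfl, ?_, ?_⟩
  · rintro (_ | ⟨ε, p⟩) (_ | ⟨ε', q⟩) <;> try rfl
    change map f (if ε = ε' then _ else none) = if ε = ε' then _ else none
    split_ifs <;> simp [map, map_inf]
  · rintro (_ | ⟨ε, p⟩) <;> rfl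

lemma leftInverse_map {α β : Type} {f : α → β} {g : β → α} (h : Function.LeftInverse g f) :
    Function.LeftInverse (map g) (map f) := by
  rintro (_ | ⟨ε, p⟩)
  · rfl
  · simp [map, h p]

end Emod

lemma mem_SL_iff (n : ℕ) (p : ℕ × ℕ) :
    p ∈ SL n ↔ 1 ≤ p.1 ∧ p.1 ≤ n ∧ 1 ≤ p.2 ∧ p.2 ≤ n ∧ p.1 ≤ p.2 + 1 ∧ p.2 ≤ p.1 + 2 :=
  Iff.rfl

lemma mem_SL0_iff (p : ℕ × ℕ) :
    p ∈ SL0 ↔ p = (1,1) ∨ p = (1,2) ∨ p = (2,1) ∨ p = (2,2) ∨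
      p = (3,3) ∨ p = (3,4) ∨ p = (4,3) ∨ p = (4,4) :=
  Iff.rfl

def blockShift (n x : ℕ) : ℕ := if x ≤ 2 then x else x + n - 4

lemma blockShift_of_le_two (n : ℕ) {x : ℕ} (hx : x ≤ 2) : blockShift n x = x := if_pos hx

lemma blockShift_three (n : ℕ) : blockShift n 3 = n - 1 := by simp [blockShift]; omega

lemma blockShift_four (n : ℕ) : blockShift n 4 = n := by simp [blockShift]

lemma monotone_blockShift {n : ℕ} (hn : 4 ≤ n) : Monotone (blockShift n) := by
  intro x y hxy
  unfold blockShift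
  split_ifs <;> omega

lemma blockShift_mem_SL {n : ℕ} (hn : 4 ≤ n) {p : ℕ × ℕ} (hp : p ∈ SL0) :
    (blockShift n p.1, blockShift n p.2) ∈ SL n := by
  rw [mem_SL0_iff] at hp
  rcases hp with rfl | rfl | rfl | rfl | rfl | rfl | rfl | rfl <;>
    simp only [mem_SL_iff, blockShift] <;> split_ifs <;> omega

def embedS0 (n : ℕ) (hn : 4 ≤ n) : InfHom SL0 (SL n) where
  toFun p := ⟨(blockShift n p.1.1, blockShift n p.1.2), blockShift_mem_SL hn p.2⟩
  map_inf' _ _ := Subtype.ext <|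
    Prod.ext ((monotone_blockShift hn).map_min) ((monotone_blockShift hn).map_min)

def collapse (n : ℕ) (p : ℕ × ℕ) : ℕ × ℕ :=
  if (n - 1, n - 1) ≤ p then (p.1 - (n - 4), p.2 - (n - 4)) else p ⊓ (2, 2)

lemma collapse_mem_SL0 {n : ℕ} (hn : 4 ≤ n) {p : ℕ × ℕ} (hp : p ∈ SL n) : collapse n p ∈ SL0 := by
  rw [mem_SL_iff] at hp
  rw [mem_SL0_iff]
  unfold collapse
  split_ifs
  all_goals simp only [Prod.le_def, Prod.ext_iff, Prod.inf_def] at *; omega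

-- The corner `{n-1,n}²` is an up-set and `collapse` maps it above `(2, 2)`.
lemma collapse_inf {n : ℕ} (hn : 4 ≤ n) (p q : ℕ × ℕ) :
    collapse n (p ⊓ q) = collapse n p ⊓ collapse n q := by
  unfold collapse
  split_ifs <;> simp only [Prod.le_def, Prod.ext_iff, Prod.inf_def] at * <;> omega

lemma collapse_blockShift {n : ℕ} (hn : 4 ≤ n) {p : ℕ × ℕ} (hp : p ∈ SL0) :
    collapse n (blockShift n p.1, blockShift n p.2) = p := by
  rw [mem_SL0_iff] at hp
  rcases hp with rfl | rfl | rfl | rfl | rfl | rfl | rfl | rfl <;>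
    simp only [collapse, blockShift] <;> split_ifs <;>
    simp only [Prod.le_def, Prod.ext_iff, Prod.inf_def] at * <;> omega

def retractS0 (n : ℕ) (hn : 4 ≤ n) : InfHom (SL n) SL0 where
  toFun p := ⟨collapse n p, collapse_mem_SL0 hn p.2⟩
  map_inf' p q := Subtype.ext (collapse_inf hn p q)

lemma retractS0_embedS0 {n : ℕ} (hn : 4 ≤ n) :
    Function.LeftInverse (retractS0 n hn) (embedS0 n hn) :=
  fun p => Subtype.ext (collapse_blockShift hn p.2)

lemma map_embedS0_eElt0 {n : ℕ} (hn : 4 ≤ n) (ε : Bool) {i k : ℕ} (h : (i, k) ∈ SL0) :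
    Emod.map (embedS0 n hn) (eElt0 ε i k) = eElt n ε (blockShift n i) (blockShift n k) := by
  rw [eElt0, dif_pos h, eElt, dif_pos (blockShift_mem_SL hn h)]
  rfl

/-- For `n ≥ 4`, the map `κ : E_0 → E(n)` given by `κ(none) = none` and
`κ(some (ε, p)) = some (ε, φ(p))`, with `φ` fixing `(1,1),(1,2),(2,1),(2,2)` and
sending `(3,3),(3,4),(4,3),(4,4)` to `(n−1,n−1),(n−1,n),(n,n−1),(n,n)`, is injective
and preserves `∔`, `−` and `0`, and admits a left inverse `λ : E(n) → E_0` that also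
preserves `∔`, `−` and `0`. -/
theorem stmt7 (n : ℕ) (hn : 4 ≤ n) :
    ∃ κ : E0 → En n,
      IsFHom κ ∧ Function.Injective κ ∧
      κ none = none ∧
      (∀ ε : Bool,
        κ (eElt0 ε 1 1) = eElt n ε 1 1 ∧
        κ (eElt0 ε 1 2) = eElt n ε 1 2 ∧
        κ (eElt0 ε 2 1) = eElt n ε 2 1 ∧
        κ (eElt0 ε 2 2) = eElt n ε 2 2 ∧
        κ (eElt0 ε 3 3) = eElt n ε (n - 1) (n - 1) ∧
        κ (eElt0 ε 3 4) = eElt n ε (n - 1) n ∧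
        κ (eElt0 ε 4 3) = eElt n ε n (n - 1) ∧
        κ (eElt0 ε 4 4) = eElt n ε n n) ∧
      ∃ lam : En n → E0, IsFHom lam ∧ ∀ x, lam (κ x) = x := by
  have hsplit := Emod.leftInverse_map (retractS0_embedS0 hn)
  refine ⟨Emod.map (embedS0 n hn), Emod.isFHom_map _, hsplit.injective, rfl, fun ε => ?_,
    Emod.map (retractS0 n hn), Emod.isFHom_map _, hsplit⟩
  simp [map_embedS0_eElt0 hn ε, mem_SL0_iff, blockShift_of_le_two, blockShift_three,
    blockShift_four]
end
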